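/- Let M be the rank-two cusp T² × [0,∞) = ⟨z↦z+1, z↦z+τ⟩\(horoball), and for constants b₁, b₂ ∈ ℂ let ω = −(b₁/2)(E₁ − R₂)(ω¹ − iω²) − (b₂ t²/2)(E₁ + R₂)(ω¹ + iω²). Then the pointwise norm satisfies ‖ω(w,t)‖² = |b₁|² + t⁴|b₂|², ω is in L² on M if and only if b₂ = 0, and if b₂ = 0 then ∫_M ‖ω‖² = (|b₁|²/2)·Area(∂M). -/

import Mathlib

noncomputable section

open MeasureTheory

/-- Frame sections of the flat bundle `E = ℍ³ × sl₂ℂ` (flat trivialization). -/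
def E1m (w : ℂ) (t : ℝ) : Matrix (Fin 2) (Fin 2) ℂ :=
  !![w / (2 * (t : ℂ)), (t : ℂ) / 2 - w ^ 2 / (2 * (t : ℂ));
     1 / (2 * (t : ℂ)), -(w / (2 * (t : ℂ)))]

def E2m (w : ℂ) (t : ℝ) : Matrix (Fin 2) (Fin 2) ℂ :=
  Complex.I • !![-(w / (2 * (t : ℂ))), (t : ℂ) / 2 + w ^ 2 / (2 * (t : ℂ));
                 -(1 / (2 * (t : ℂ))), w / (2 * (t : ℂ))]

def R2m (w : ℂ) (t : ℝ) : Matrix (Fin 2) (Fin 2) ℂ := Complex.I • E2m w t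

def gmat (w : ℂ) (t : ℝ) : Matrix (Fin 2) (Fin 2) ℂ :=
  !![(Real.sqrt t : ℂ), w / (Real.sqrt t : ℂ); 0, 1 / (Real.sqrt t : ℂ)]

def gmatInv (w : ℂ) (t : ℝ) : Matrix (Fin 2) (Fin 2) ℂ :=
  !![1 / (Real.sqrt t : ℂ), -(w / (Real.sqrt t : ℂ)); 0, (Real.sqrt t : ℂ)]

/-- Squared fiber norm of `X ∈ sl₂ℂ` at `(w,t) ∈ ℍ³`. -/
def fiberNormSq (X : Matrix (Fin 2) (Fin 2) ℂ) (w : ℂ) (t : ℝ) : ℝ :=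
  let Y := gmatInv w t * X * gmat w t
  4 * Complex.normSq (Y 0 0) + 2 * Complex.normSq (Y 0 1) + 2 * Complex.normSq (Y 1 0)

/-!
Conjugation by `gmat w t`, which moves the base point to `(w, t)`, turns the frame sections
`E₁ - R₂` and `E₁ + R₂` into the constant nilpotents `e₁₂` and `e₂₁`, which are orthogonal of
squared norm `2`; hence `‖ω‖² = |b₁|² + t⁴ |b₂|²` pointwise. Against the volume element
`t⁻³ dx dy dt` on the fundamental domain `P × [1, ∞)` the integrand is `|b₁|² t⁻³ + |b₂|² t`,
which depends on `t` alone, so Fubini splits off `Area P = Im τ`; finally `∫₁^∞ t⁻³ = 1/2`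
while `∫₁^∞ t` diverges.
-/

open Set

lemma E1m_sub_R2m (w : ℂ) (t : ℝ) : E1m w t - R2m w t = !![0, (t : ℂ); 0, 0] := by
  simp only [E1m, R2m, E2m, smul_smul, Complex.I_mul_I, neg_one_smul, sub_neg_eq_add]
  ext i j
  fin_cases i <;> fin_cases j <;> simp

lemma E1m_add_R2m (w : ℂ) (t : ℝ) :
    E1m w t + R2m w t = (t : ℂ)⁻¹ • !![w, -w ^ 2; 1, -w] := by
  simp only [E1m, R2m, E2m, smul_smul, Complex.I_mul_I, neg_one_smul, ← sub_eq_add_neg]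
  ext i j
  fin_cases i <;> fin_cases j <;> simp <;> ring

lemma gmatInv_mul_mul_gmat {w : ℂ} {t : ℝ} (ht : 0 < t) (a b : ℂ) :
    gmatInv w t * (a • (E1m w t - R2m w t) + b • (E1m w t + R2m w t)) * gmat w t
      = !![0, a; b, 0] := by
  have hs : ((Real.sqrt t : ℝ) : ℂ) ^ 2 = t := by
    rw [← Complex.ofReal_pow, Real.sq_sqrt ht.le]
  have hs0 : ((Real.sqrt t : ℝ) : ℂ) ≠ 0 := by
    simpa using Real.sqrt_ne_zero'.2 ht
  rw [E1m_sub_R2m, E1m_add_R2m, ← hs]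
  simp only [gmat, gmatInv, Matrix.smul_of]
  generalize ((Real.sqrt t : ℝ) : ℂ) = s at hs0 ⊢
  ext i j
  fin_cases i <;> fin_cases j <;> simp [Matrix.mul_apply, Fin.sum_univ_two, hs0] <;>
    field_simp <;> ring

lemma fiberNormSq_smul_add_smul {w : ℂ} {t : ℝ} (ht : 0 < t) (a b : ℂ) :
    fiberNormSq (a • (E1m w t - R2m w t) + b • (E1m w t + R2m w t)) w t
      = 2 * Complex.normSq a + 2 * Complex.normSq b := by
  rw [fiberNormSq, gmatInv_mul_mul_gmat ht]
  simp

def cylinderOver (P : Set (ℝ × ℝ)) (S : Set ℝ) : Set (ℝ × ℝ × ℝ) :=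
  {p | (p.1, p.2.1) ∈ P ∧ p.2.2 ∈ S}

lemma prodAssoc_preimage_cylinderOver (P : Set (ℝ × ℝ)) (S : Set ℝ) :
    MeasurableEquiv.prodAssoc ⁻¹' cylinderOver P S = P ×ˢ S := rfl

lemma integrableOn_cylinderOver_iff {P : Set (ℝ × ℝ)} (hP₀ : volume P ≠ 0) (hP : volume P ≠ ⊤)
    (S : Set ℝ) (f : ℝ → ℝ) :
    IntegrableOn (fun p : ℝ × ℝ × ℝ => f p.2.2) (cylinderOver P S) ↔ IntegrableOn f S := by
  have : IsFiniteMeasure (volume.restrict P) := isFiniteMeasure_restrict.2 hP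
  rw [← volume_preserving_prodAssoc.integrableOn_comp_preimage
    (MeasurableEquiv.measurableEmbedding _), prodAssoc_preimage_cylinderOver, IntegrableOn,
    Measure.volume_eq_prod, ← Measure.prod_restrict]
  exact Integrable.comp_snd_iff (Measure.restrict_eq_zero.not.2 hP₀)

lemma setIntegral_cylinderOver (P : Set (ℝ × ℝ)) (S : Set ℝ) (f : ℝ → ℝ) :
    ∫ p in cylinderOver P S, f p.2.2 = volume.real P * ∫ t in S, f t := by
  rw [← volume_preserving_prodAssoc.setIntegral_preimage_emb
    (MeasurableEquiv.measurableEmbedding _), prodAssoc_preimage_cylinderOver,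
    Measure.volume_eq_prod, ← Measure.prod_restrict]
  exact (integral_fun_snd f).trans (by rw [measureReal_restrict_apply_univ, smul_eq_mul])

def periodMap (τ : ℂ) : ℝ × ℝ →ₗ[ℝ] ℝ × ℝ where
  toFun q := (q.1 + q.2 * τ.re, q.2 * τ.im)
  map_add' p q := by ext <;> simp <;> ring
  map_smul' c q := by ext <;> simp <;> ring

lemma det_periodMap (τ : ℂ) : LinearMap.det (periodMap τ) = τ.im := by
  rw [← LinearMap.det_toMatrix (Module.Basis.finTwoProd ℝ), Matrix.det_fin_two]
  simp [LinearMap.toMatrix_apply, periodMap]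

lemma volume_periodMap_image (τ : ℂ) (s : Set (ℝ × ℝ)) :
    volume (periodMap τ '' s) = ENNReal.ofReal |τ.im| * volume s := by
  rw [Measure.addHaar_image_linearMap, det_periodMap]

lemma volume_unitSquare : volume (Ico (0 : ℝ) 1 ×ˢ Ico (0 : ℝ) 1) = 1 := by
  simp [Measure.volume_eq_prod, Measure.prod_prod]

lemma div_pow_eqOn_mul_rpow_neg (c : ℝ) (n : ℕ) :
    EqOn (fun t : ℝ => c / t ^ n) (fun t => c * t ^ (-(n : ℝ))) (Ioi 0) := fun t ht => by
  simp [Real.rpow_neg (le_of_lt ht), div_eq_mul_inv]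

lemma integrableOn_Ici_one_div_pow {n : ℕ} (hn : 1 < n) (c : ℝ) :
    IntegrableOn (fun t : ℝ => c / t ^ n) (Ici 1) := by
  rw [integrableOn_Ici_iff_integrableOn_Ioi]
  have h : IntegrableOn (fun t : ℝ => c * t ^ (-(n : ℝ))) (Ioi 1) :=
    (integrableOn_Ioi_rpow_of_lt (neg_lt_neg (by exact_mod_cast hn)) one_pos).const_mul c
  exact h.congr_fun ((div_pow_eqOn_mul_rpow_neg c n).mono (Ioi_subset_Ioi zero_le_one)).symm
    measurableSet_Ioi

lemma integral_Ici_one_div_pow {n : ℕ} (hn : 1 < n) (c : ℝ) :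
    ∫ t in Ici 1, c / t ^ n = c / (n - 1) := by
  rw [integral_Ici_eq_integral_Ioi, setIntegral_congr_fun measurableSet_Ioi
    ((div_pow_eqOn_mul_rpow_neg c n).mono (Ioi_subset_Ioi zero_le_one)), integral_const_mul,
    integral_Ioi_rpow_of_lt (neg_lt_neg (by exact_mod_cast hn)) one_pos, Real.one_rpow,
    neg_add_eq_sub, ← neg_sub, neg_div_neg_eq]
  ring

lemma integrableOn_Ici_one_const_mul_iff (c : ℝ) :
    IntegrableOn (fun t : ℝ => c * t) (Ici 1) ↔ c = 0 := by
  refine ⟨fun h => ?_, by rintro rfl; simp⟩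
  by_contra hc
  have hid : IntegrableOn (fun t : ℝ => t ^ (1 : ℝ)) (Ioi 1) := by
    simpa [IntegrableOn, integrable_const_mul_iff (IsUnit.mk0 c hc)] using
      h.mono_set Ioi_subset_Ici_self
  exact absurd ((integrableOn_Ioi_rpow_iff one_pos).1 hid) (by norm_num)

lemma integrableOn_Ici_one_add_mul_div_pow_three_iff (c₁ c₂ : ℝ) :
    IntegrableOn (fun t : ℝ => (c₁ + t ^ 4 * c₂) / t ^ 3) (Ici 1) ↔ c₂ = 0 := by
  have hsplit : EqOn (fun t : ℝ => (c₁ + t ^ 4 * c₂) / t ^ 3)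
      (fun t => c₁ / t ^ 3 + c₂ * t) (Ici 1) := fun t ht => by
    have : t ≠ 0 := (zero_lt_one.trans_le ht).ne'
    field_simp
  rw [integrableOn_congr_fun hsplit measurableSet_Ici, IntegrableOn,
    integrable_add_iff_integrable_right' (integrableOn_Ici_one_div_pow (by norm_num) c₁)]
  exact integrableOn_Ici_one_const_mul_iff c₂

/-- On the rank-two cusp `M = ⟨z ↦ z+1, z ↦ z+τ⟩\{t ≥ 1}` (fundamental domain
`P × [1, ∞)` with `P` the parallelogram spanned by `1` and `τ`, volume element
`t⁻³ dx dy dt`, boundary torus of area `Im τ`), the `E`-valued 1-form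
`ω = -(b₁/2)(E₁-R₂)(ω¹ - iω²) - (b₂t²/2)(E₁+R₂)(ω¹ + iω²)` has pointwise norm
`‖ω(w,t)‖² = |b₁|² + t⁴|b₂|²` (the sum of the squared fiber norms of `ω(e₁)`, `ω(e₂)`,
`ω(e₃) = 0`), is in `L²` on `M` iff `b₂ = 0`, and if `b₂ = 0` then
`∫_M ‖ω‖² = (|b₁|²/2)·Area(∂M)`. -/
theorem cusp_model_deformation_norm (τ b₁ b₂ : ℂ) (hτ : 0 < τ.im) :
    let ω₁ : ℂ → ℝ → Matrix (Fin 2) (Fin 2) ℂ := fun w t =>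
      (-(b₁ / 2)) • (E1m w t - R2m w t) + (-(b₂ * (t : ℂ) ^ 2 / 2)) • (E1m w t + R2m w t)
    let ω₂ : ℂ → ℝ → Matrix (Fin 2) (Fin 2) ℂ := fun w t =>
      (b₁ * Complex.I / 2) • (E1m w t - R2m w t)
        + (-(b₂ * (t : ℂ) ^ 2 * Complex.I / 2)) • (E1m w t + R2m w t)
    let P : Set (ℝ × ℝ) :=
      (fun q : ℝ × ℝ => (q.1 + q.2 * τ.re, q.2 * τ.im)) ''
        (Set.Ico (0 : ℝ) 1 ×ˢ Set.Ico (0 : ℝ) 1)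
    let D : Set (ℝ × ℝ × ℝ) := {p | (p.1, p.2.1) ∈ P ∧ 1 ≤ p.2.2}
    let F : ℝ × ℝ × ℝ → ℝ := fun p =>
      (‖b₁‖ ^ 2 + p.2.2 ^ 4 * ‖b₂‖ ^ 2) / p.2.2 ^ 3
    (∀ (w : ℂ) (t : ℝ), 0 < t →
        fiberNormSq (ω₁ w t) w t + fiberNormSq (ω₂ w t) w t
          = ‖b₁‖ ^ 2 + t ^ 4 * ‖b₂‖ ^ 2)
    ∧ (IntegrableOn F D volume ↔ b₂ = 0)
    ∧ (b₂ = 0 → ∫ p in D, F p = ‖b₁‖ ^ 2 / 2 * τ.im) := by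
  intro ω₁ ω₂ P D F
  have hP : volume P = ENNReal.ofReal τ.im := by
    rw [show P = periodMap τ '' _ from rfl, volume_periodMap_image, volume_unitSquare,
      abs_of_pos hτ, mul_one]
  have hP₀ : volume P ≠ 0 := by simpa [hP] using hτ
  have hP_top : volume P ≠ ⊤ := hP ▸ ENNReal.ofReal_ne_top
  have hD : D = cylinderOver P (Ici 1) := rfl
  refine ⟨fun w t ht => ?_, ?_, ?_⟩
  · simp only [ω₁, ω₂, fiberNormSq_smul_add_smul ht]
    simp [← Complex.sq_norm]
    ring
  · rw [hD]
    refine (integrableOn_cylinderOver_iff hP₀ hP_top (Ici 1)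
      (fun t => (‖b₁‖ ^ 2 + t ^ 4 * ‖b₂‖ ^ 2) / t ^ 3)).trans ?_
    rw [integrableOn_Ici_one_add_mul_div_pow_three_iff, sq_eq_zero_iff, norm_eq_zero]
  · rintro rfl
    calc ∫ p in D, F p = volume.real P * ∫ t in Ici 1, ‖b₁‖ ^ 2 / t ^ 3 := by
          simpa [F, hD] using setIntegral_cylinderOver P (Ici 1) (fun t => ‖b₁‖ ^ 2 / t ^ 3)
      _ = ‖b₁‖ ^ 2 / 2 * τ.im := by
          rw [integral_Ici_one_div_pow (by norm_num), measureReal_def, hP,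
            ENNReal.toReal_ofReal hτ.le]
          norm_num
          ring

end
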